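/- arXiv:math/0409252 — 3 statements merged into one kernel-verified Lean document; each statement's English description precedes it below -/
import Mathlib

section
/- Let (X,ℬ,m,T) be an exact nonsingular endomorphism (i.e. ⋂_{n≥0} T⁻ⁿℬ is trivial mod m), 𝔾 a locally compact Polish group, f : X → 𝔾 measurable, and T_f(x,g) = (Tx, f(x)g). If F : X × 𝔾 → ℝ is bounded measurable, measurable with respect to the tail σ-algebra 𝒯(T_f), and invariant under every Q_t(x,g) = (x,gt⁻¹), then F is constant almost everywhere with respect to m × m_𝔾. -/
open MeasureTheory

/-! Invariance under all `Q_t` means `F (x, g) = F (x, 1)`, so `F` is really a function `h` of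
`x` alone. Since the `n`-th iterate of `T_f` is again a skew product over `T^[n]`, tail
measurability of `F` makes `h` a function of `T^[n] x` for every `n`, i.e. measurable for the
tail σ-algebra of `T`. Exactness makes every tail set null or conull, and a function
measurable for such a σ-algebra is a.e. constant. -/

section SkewProduct

variable {X G : Type*}

def skewProduct [Mul G] (T : X → X) (f : X → G) : X × G → X × G :=
  fun q => (T q.1, f q.1 * q.2)

def skewCocycle [Monoid G] (T : X → X) (f : X → G) : ℕ → X → G
  | 0 => 1
  | n + 1 => fun x => skewCocycle T f n (T x) * f x

theorem skewProduct_iterate [Monoid G] (T : X → X) (f : X → G) (n : ℕ) :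
    (skewProduct T f)^[n] = skewProduct T^[n] (skewCocycle T f n) := by
  induction n with
  | zero => funext q; simp [skewProduct, skewCocycle]
  | succ n ih =>
    funext q
    rw [Function.iterate_succ_apply, ih]
    simp [skewProduct, skewCocycle, mul_assoc]

variable [Group G] {γ : Type*} {F : X × G → γ}

theorem apply_eq_apply_fst_one (hF : ∀ t : G, ∀ q : X × G, F (q.1, q.2 * t⁻¹) = F q)
    (q : X × G) : F q = F (q.1, 1) := by
  simpa using (hF q.2 q).symm

theorem apply_mk_one_eq_comp_iterate (hF : ∀ t : G, ∀ q : X × G, F (q.1, q.2 * t⁻¹) = F q)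
    {T : X → X} {f : X → G} {n : ℕ} {Fn : X × G → γ}
    (hFn : F = Fn ∘ (skewProduct T f)^[n]) :
    (fun x => F (x, 1)) = (fun y => Fn (y, 1)) ∘ T^[n] := by
  funext x
  have hx := hF (skewCocycle T f n x) (x, 1)
  rw [one_mul] at hx
  rw [← hx, hFn, skewProduct_iterate]
  simp [skewProduct]

end SkewProduct

section TailSigma

variable {X β : Type*} [m0 : MeasurableSpace X]

abbrev tailSigma (T : X → X) : MeasurableSpace X :=
  ⨅ n : ℕ, m0.comap T^[n]

theorem exists_measurableSet_eq_preimage_iterate_of_measurableSet_tailSigma {T : X → X}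
    {A : Set X} (hA : MeasurableSet[tailSigma T] A) (n : ℕ) :
    ∃ B : Set X, MeasurableSet B ∧ A = T^[n] ⁻¹' B := by
  obtain ⟨B, hB, rfl⟩ := MeasurableSpace.measurableSet_iInf.1 hA n
  exact ⟨B, hB, rfl⟩

theorem measurable_tailSigma_of_forall_eq_comp_iterate [MeasurableSpace β] {T : X → X}
    {h : X → β} (hh : ∀ n : ℕ, ∃ hn : X → β, Measurable hn ∧ h = hn ∘ T^[n]) :
    Measurable[tailSigma T] h := fun U hU =>
  MeasurableSpace.measurableSet_iInf.2 fun n => by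
    obtain ⟨hn, hnm, rfl⟩ := hh n
    exact ⟨hn ⁻¹' U, hnm hU, rfl⟩

end TailSigma

theorem exists_ae_eq_const_of_measurable_of_trivial {X β : Type*} [MeasurableSpace X]
    [MeasurableSpace β] [MeasurableSpace.CountablySeparated β] [Nonempty β] {μ : Measure X}
    {𝓣 : MeasurableSpace X} (h𝓣 : ∀ A, MeasurableSet[𝓣] A → μ A = 0 ∨ μ Aᶜ = 0)
    {h : X → β} (hh : Measurable[𝓣] h) :
    ∃ c, h =ᵐ[μ] Function.const X c :=
  Filter.exists_eventuallyEq_const_of_forall_separating MeasurableSet fun _ hU =>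
    (h𝓣 _ (hh hU)).symm.imp id measure_eq_zero_iff_ae_notMem.1

theorem tail_measurable_Q_invariant_const_of_exact_general {X G : Type*}
    [MeasurableSpace X] [MeasurableSpace G]
    [Group G]
    (m : Measure X)
    (mG : Measure G)
    (T : X → X)
    (hexact : ∀ A : Set X,
      (∀ n : ℕ, ∃ B : Set X, MeasurableSet B ∧ A = T^[n] ⁻¹' B) →
      m A = 0 ∨ m Aᶜ = 0)
    (f : X → G)
    (F : X × G → ℝ)
    (hFtail : ∀ n : ℕ, ∃ Fn : X × G → ℝ, Measurable Fn ∧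
      F = Fn ∘ (fun q : X × G => (T q.1, f q.1 * q.2))^[n])
    (hFQ : ∀ t : G, ∀ q : X × G, F (q.1, q.2 * t⁻¹) = F q) :
    ∃ c : ℝ, ∀ᵐ q ∂(m.prod mG), F q = c := by
  have hfactor : ∀ n : ℕ, ∃ hn : X → ℝ, Measurable hn ∧ (fun x => F (x, 1)) = hn ∘ T^[n] := by
    intro n
    obtain ⟨Fn, hFnm, hFn⟩ := hFtail n
    exact ⟨fun y => Fn (y, 1), hFnm.comp (measurable_id.prodMk measurable_const),
      apply_mk_one_eq_comp_iterate hFQ hFn⟩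
  obtain ⟨c, hc⟩ := exists_ae_eq_const_of_measurable_of_trivial
    (fun A hA => hexact A (exists_measurableSet_eq_preimage_iterate_of_measurableSet_tailSigma hA))
    (measurable_tailSigma_of_forall_eq_comp_iterate hfactor)
  refine ⟨c, (Measure.quasiMeasurePreserving_fst.ae hc).mono fun q hq => ?_⟩
  rw [apply_eq_apply_fst_one hFQ q]
  exact hq

/-- If `T` is exact then every bounded measurable function on `X × 𝔾` which is
measurable with respect to the tail σ-algebra of the skew product `T_f` and invariant
under every right translation `Q_t` is a.e. constant w.r.t. `m × m_𝔾`. -/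
theorem tail_measurable_Q_invariant_const_of_exact {X G : Type*}
    [MeasurableSpace X] [MeasurableSpace G]
    [Group G] [TopologicalSpace G] [IsTopologicalGroup G] [PolishSpace G]
    [LocallyCompactSpace G] [BorelSpace G]
    (m : Measure X) [IsProbabilityMeasure m]
    (mG : Measure G) [mG.IsHaarMeasure]
    (T : X → X) (hT : Measurable T)
    (hns : ∀ A : Set X, MeasurableSet A → (m (T ⁻¹' A) = 0 ↔ m A = 0))
    (hexact : ∀ A : Set X,
      (∀ n : ℕ, ∃ B : Set X, MeasurableSet B ∧ A = T^[n] ⁻¹' B) →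
      m A = 0 ∨ m Aᶜ = 0)
    (f : X → G) (hf : Measurable f)
    (F : X × G → ℝ) (hFbdd : ∃ C : ℝ, ∀ q, |F q| ≤ C) (hFmeas : Measurable F)
    (hFtail : ∀ n : ℕ, ∃ Fn : X × G → ℝ, Measurable Fn ∧
      F = Fn ∘ (fun q : X × G => (T q.1, f q.1 * q.2))^[n])
    (hFQ : ∀ t : G, ∀ q : X × G, F (q.1, q.2 * t⁻¹) = F q) :
    ∃ c : ℝ, ∀ᵐ q ∂(m.prod mG), F q = c :=
  tail_measurable_Q_invariant_const_of_exact_general m mG T hexact f F hFtail hFQ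
end

section
/- Let 𝔾 be a locally compact Polish group, ℍ ≤ 𝔾 a closed subgroup, let V be the translation 𝔾-action on 𝔾/ℍ with the quotient of Haar measure, and let S be a probability-preserving 𝔾-action on (Y,𝒞,ν) whose restriction S|_ℍ is ergodic. Then the product action V × S on (𝔾/ℍ) × Y is ergodic. -/
/-!
Invariance of `B` under the diagonal action makes its fibre over `g • x₀` the `S g⁻¹`-preimage of
its fibre over `x₀`, and makes the fibre over `x₀` invariant under the stabilizer of `x₀` (which is
`H` for `x₀ = H` in `G ⧸ H`). Since `G` acts transitively on `G ⧸ H` and `S` preserves `ν`, every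
fibre of `B` has the measure of the fibre over `x₀`, which is null or conull by ergodicity of `S`
restricted to `H`.
-/

open MeasureTheory MulAction

namespace MulAction

variable {G X Y : Type*} [Group G] [MulAction G X] {S : G → Y → Y} {B : Set (X × Y)}

theorem preimage_prodMk_smul_eq
    (hB : ∀ t : G, (fun q : X × Y => (t • q.1, S t q.2)) ⁻¹' B = B) (g : G) (x : X) :
    Prod.mk (g • x) ⁻¹' B = S g⁻¹ ⁻¹' (Prod.mk x ⁻¹' B) := by
  ext y
  conv_lhs => rw [← hB g⁻¹]
  simp

theorem preimage_prodMk_eq_of_mem_stabilizer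
    (hB : ∀ t : G, (fun q : X × Y => (t • q.1, S t q.2)) ⁻¹' B = B) {x : X} {h : G}
    (hh : h ∈ stabilizer G x) :
    S h ⁻¹' (Prod.mk x ⁻¹' B) = Prod.mk x ⁻¹' B := by
  rw [← inv_inv h, ← preimage_prodMk_smul_eq hB, mem_stabilizer_iff.mp (inv_mem hh)]

variable [MeasurableSpace X] [MeasurableSpace Y] {ν : Measure Y}

theorem measure_preimage_prodMk_eq [IsPretransitive G X]
    (hS : ∀ g : G, MeasurePreserving (S g) ν ν) (hBm : MeasurableSet B)
    (hB : ∀ t : G, (fun q : X × Y => (t • q.1, S t q.2)) ⁻¹' B = B) (x₀ x : X) :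
    ν (Prod.mk x ⁻¹' B) = ν (Prod.mk x₀ ⁻¹' B) := by
  obtain ⟨g, rfl⟩ := exists_smul_eq G x₀ x
  rw [preimage_prodMk_smul_eq hB]
  exact (hS g⁻¹).measure_preimage (measurable_prodMk_left hBm).nullMeasurableSet

theorem prod_eq_zero_or_compl_of_ergodic_stabilizer [IsPretransitive G X] (μ : Measure X)
    (hS : ∀ g : G, MeasurePreserving (S g) ν ν) (x₀ : X)
    (hSx₀ : ∀ A : Set Y, MeasurableSet A → (∀ h ∈ stabilizer G x₀, S h ⁻¹' A = A) →
      ν A = 0 ∨ ν Aᶜ = 0)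
    (hBm : MeasurableSet B) (hB : ∀ t : G, (fun q : X × Y => (t • q.1, S t q.2)) ⁻¹' B = B) :
    μ.prod ν B = 0 ∨ μ.prod ν Bᶜ = 0 := by
  have hBc : ∀ t : G, (fun q : X × Y => (t • q.1, S t q.2)) ⁻¹' Bᶜ = Bᶜ := fun t => by
    rw [Set.preimage_compl, hB]
  refine (hSx₀ _ (measurable_prodMk_left hBm)
    fun h hh => preimage_prodMk_eq_of_mem_stabilizer hB hh).imp ?_ ?_ <;>
  intro hnull
  · refine Measure.measure_prod_null_of_ae_null hBm (.of_forall fun x => ?_)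
    exact (measure_preimage_prodMk_eq hS hBm hB x₀ x).trans hnull
  · refine Measure.measure_prod_null_of_ae_null hBm.compl (.of_forall fun x => ?_)
    exact (measure_preimage_prodMk_eq hS hBm.compl hBc x₀ x).trans hnull

end MulAction

theorem translation_times_S_ergodic_general {G Y : Type*}
    [Group G] [MeasurableSpace G]
    (mG : Measure G)
    (H : Subgroup G)
    [MeasurableSpace Y] (ν : Measure Y)
    (S : G → Y → Y)
    (hSmp : ∀ g : G, MeasurePreserving (S g) ν ν)
    (hSH : ∀ A : Set Y, MeasurableSet A → (∀ h ∈ H, S h ⁻¹' A = A) →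
      ν A = 0 ∨ ν Aᶜ = 0) :
    ∀ B : Set ((G ⧸ H) × Y), MeasurableSet B →
      (∀ t : G, (fun q : (G ⧸ H) × Y => (t • q.1, S t q.2)) ⁻¹' B = B) →
      ((mG.map (QuotientGroup.mk : G → G ⧸ H)).prod ν) B = 0 ∨
        ((mG.map (QuotientGroup.mk : G → G ⧸ H)).prod ν) Bᶜ = 0 := fun _ hBm hB =>
  prod_eq_zero_or_compl_of_ergodic_stabilizer _ hSmp ((1 : G) : G ⧸ H)
    (by simpa only [stabilizer_quotient] using hSH) hBm hB

/-- If `S` is a probability preserving `𝔾`-action whose restriction to a closed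
subgroup `ℍ` is ergodic, then the product of the translation `𝔾`-action on `𝔾/ℍ`
(with the quotient of Haar measure) with `S` is ergodic. -/
theorem translation_times_S_ergodic {G Y : Type*}
    [Group G] [TopologicalSpace G] [IsTopologicalGroup G] [PolishSpace G]
    [LocallyCompactSpace G] [MeasurableSpace G] [BorelSpace G]
    (mG : Measure G) [mG.IsHaarMeasure]
    (H : Subgroup G) (hHclosed : IsClosed (H : Set G))
    [MeasurableSpace Y] (ν : Measure Y) [IsProbabilityMeasure ν]
    (S : G → Y → Y) (hS1 : S 1 = id) (hSmul : ∀ g h : G, S (g * h) = S g ∘ S h)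
    (hSmp : ∀ g : G, MeasurePreserving (S g) ν ν)
    (hSH : ∀ A : Set Y, MeasurableSet A → (∀ h ∈ H, S h ⁻¹' A = A) →
      ν A = 0 ∨ ν Aᶜ = 0) :
    ∀ B : Set ((G ⧸ H) × Y), MeasurableSet B →
      (∀ t : G, (fun q : (G ⧸ H) × Y => (t • q.1, S t q.2)) ⁻¹' B = B) →
      ((mG.map (QuotientGroup.mk : G → G ⧸ H)).prod ν) B = 0 ∨
        ((mG.map (QuotientGroup.mk : G → G ⧸ H)).prod ν) Bᶜ = 0 :=
  translation_times_S_ergodic_general mG H ν S hSmp hSH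
end

section
/- Let p ∈ 𝒫(ℤ) with ℍ := ⟨supp(p) − supp(p)⟩ = dℤ for some d ≥ 1, let (X, μ_p, T) be the one-sided Bernoulli shift with X = ℤ^ℕ, μ_p = p^ℕ, f(x) := x₁, and let S be an ergodic probability preserving transformation of (Y,𝒞,ν). If S^d is not ergodic, then the Rokhlin endomorphism T̃(x,y) = (Tx, S^{f(x)} y) on (X × Y, μ_p × ν) is not exact. -/
/-!
Fix `c` in the support of `p`. Almost surely every increment `x i - c` lies in `dℤ`, so the
fibre point `S ^ (x 0 + ⋯ + x (n-1) - n c) y` of the `n`-th iterate stays in the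
`S ^ d`-orbit of `y`. For a measurable `S ^ d`-invariant set `A` with `0 < ν A < 1`, the event
"eventually `S ^ (x 0 + ⋯ + x (n-1) - n c) y ∈ A`" therefore agrees a.e. with `X × A`; shifting
the recentring constant by `m c` shows that it is also `T̃⁻ᵐ` of a measurable set for every
`m`. It is thus a tail event of measure `ν A`, which is neither `0` nor `1`.
-/

open MeasureTheory Pointwise Filter Finset

namespace Equiv.Perm

variable {Y : Type*}

theorem preimage_zpow_eq_self {τ : Perm Y} {A : Set Y} (h : ⇑τ ⁻¹' A = A) (k : ℤ) :
    ⇑(τ ^ k) ⁻¹' A = A := by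
  have hτ : τ⁻¹ ∈ MulAction.stabilizer (Perm Y) A := by
    rwa [MulAction.mem_stabilizer_iff, ← Set.preimage_smul]
  have := Subgroup.zpow_mem _ hτ k
  rwa [MulAction.mem_stabilizer_iff, inv_zpow, ← Set.preimage_smul] at this

theorem preimage_zpow_eq_self_of_dvd {S : Perm Y} {A : Set Y} {d k : ℤ}
    (h : ⇑(S ^ d) ⁻¹' A = A) (hk : d ∣ k) : ⇑(S ^ k) ⁻¹' A = A := by
  obtain ⟨j, rfl⟩ := hk
  rw [zpow_mul]
  exact preimage_zpow_eq_self h j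

/-- Only nonnegative powers of `S` are known to be measurable; invariance under `S ^ d`
reduces every power to one of those. -/
theorem measurableSet_preimage_zpow [MeasurableSpace Y] {S : Perm Y} (hS : Measurable S)
    {A : Set Y} (hA : MeasurableSet A) {d : ℕ} (hd : d ≠ 0)
    (h : ⇑(S ^ (d : ℤ)) ⁻¹' A = A) (k : ℤ) : MeasurableSet (⇑(S ^ k) ⁻¹' A) := by
  have hr : 0 ≤ k % d := Int.emod_nonneg k (by exact_mod_cast hd)
  have hsplit : S ^ k = S ^ ((d : ℤ) * (k / d)) * S ^ (k % d).toNat := by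
    rw [← zpow_natCast, Int.toNat_of_nonneg hr, ← zpow_add, Int.mul_ediv_add_emod]
  rw [hsplit, coe_mul, Set.preimage_comp, preimage_zpow_eq_self_of_dvd h (dvd_mul_right _ _),
    coe_pow]
  exact hS.iterate _ hA

end Equiv.Perm

theorem Int.dvd_sub_of_closure_sub_eq_zmultiples {T : Set ℤ} {d : ℤ}
    (hT : AddSubgroup.closure (T - T) = AddSubgroup.zmultiples d) {a b : ℤ}
    (ha : a ∈ T) (hb : b ∈ T) : d ∣ a - b := by
  rw [← Int.mem_zmultiples_iff, ← hT]
  exact AddSubgroup.subset_closure (Set.sub_mem_sub ha hb)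

theorem MeasureTheory.ae_pos_singleton {α : Type*} [MeasurableSpace α] [Countable α]
    (p : Measure α) : ∀ᵐ a ∂p, 0 < p {a} :=
  ae_iff_of_countable.2 fun _ h => pos_iff_ne_zero.2 h

section Cylinder

variable {α : Type*} [MeasurableSpace α] {p : Measure α} [IsProbabilityMeasure p]
  {μ : Measure (ℕ → α)}

theorem map_eval_eq_of_cylinder
    (hcyl : ∀ (n : ℕ) (A : Fin n → Set α), (∀ i, MeasurableSet (A i)) →
      μ {x : ℕ → α | ∀ i : Fin n, x (i : ℕ) ∈ A i} = ∏ i : Fin n, p (A i)) (i : ℕ) :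
    μ.map (fun x => x i) = p := by
  ext C hC
  classical
  let A : Fin (i + 1) → Set α := fun j => if j = Fin.last i then C else Set.univ
  have hA : {x : ℕ → α | ∀ j : Fin (i + 1), x j ∈ A j} = (fun x => x i) ⁻¹' C := by
    ext x
    simp only [A, Set.mem_ofPred_eq, Set.mem_preimage, Fin.forall_fin_succ']
    simp [Fin.castSucc_ne_last]
  rw [Measure.map_apply (measurable_pi_apply i) hC, ← hA,
    hcyl _ A fun j => by by_cases h : j = Fin.last i <;> simp [A, h, hC],
    Fin.prod_univ_castSucc]
  simp [A, Fin.castSucc_ne_last]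

theorem ae_forall_pos_singleton_of_cylinder [Countable α]
    (hcyl : ∀ (n : ℕ) (A : Fin n → Set α), (∀ i, MeasurableSet (A i)) →
      μ {x : ℕ → α | ∀ i : Fin n, x (i : ℕ) ∈ A i} = ∏ i : Fin n, p (A i)) :
    ∀ᵐ x ∂μ, ∀ i, 0 < p {x i} := by
  refine ae_all_iff.2 fun i =>
    ae_of_ae_map (f := fun x : ℕ → α => x i) (p := fun a => 0 < p {a})
      (measurable_pi_apply i).aemeasurable ?_
  rw [map_eval_eq_of_cylinder hcyl i]
  exact ae_pos_singleton p

end Cylinder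

section SkewProduct

variable {Y : Type*} (S : Equiv.Perm Y)

def skewShift (q : (ℕ → ℤ) × Y) : (ℕ → ℤ) × Y :=
  (fun k => q.1 (k + 1), (S ^ q.1 0) q.2)

theorem skewShift_iterate (m : ℕ) (q : (ℕ → ℤ) × Y) :
    (skewShift S)^[m] q = (fun k => q.1 (k + m), (S ^ ∑ i ∈ range m, q.1 i) q.2) := by
  induction m generalizing q with
  | zero => simp
  | succ m ih =>
    rw [Function.iterate_succ_apply, ih]
    simp only [skewShift, add_assoc, Prod.mk.injEq, true_and]
    rw [← Equiv.Perm.mul_apply, ← zpow_add, sum_range_succ' _ m]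

/-- The offset `a` compensates the drift `m * c` accumulated along `m` steps of `skewShift S`. -/
def driftSet (A : Set Y) (c a : ℤ) : Set ((ℕ → ℤ) × Y) :=
  {q | ∀ᶠ n in atTop, (S ^ (∑ i ∈ range n, q.1 i - n * c - a)) q.2 ∈ A}

variable {S}

theorem driftSet_eq_preimage_iterate (A : Set Y) (c a : ℤ) (m : ℕ) :
    driftSet S A c a = (skewShift S)^[m] ⁻¹' driftSet S A c (a + m * c) := by
  ext ⟨x, y⟩
  simp only [driftSet, Set.mem_preimage, skewShift_iterate, Set.mem_ofPred_eq]
  conv_lhs => rw [← map_add_atTop_eq_nat m, eventually_map]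
  refine eventually_congr (Eventually.of_forall fun n => ?_)
  rw [← Equiv.Perm.mul_apply, ← zpow_add, add_comm n m, sum_range_add]
  push_cast
  ring_nf

theorem measurableSet_driftSet [MeasurableSpace Y] {A : Set Y}
    (hA : ∀ k : ℤ, MeasurableSet (⇑(S ^ k) ⁻¹' A)) (c a : ℤ) :
    MeasurableSet (driftSet S A c a) := by
  have hterm : ∀ g : (ℕ → ℤ) → ℤ, Measurable g →
      MeasurableSet {q : (ℕ → ℤ) × Y | (S ^ g q.1) q.2 ∈ A} := by
    intro g hg
    have : Measurable fun p : ℤ × Y => (S ^ p.1) p.2 ∈ A :=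
      measurable_from_prod_countable_right fun k => measurableSet_setOfPred.1 (hA k)
    exact measurableSet_setOfPred.2 (this.comp (hg.prodMap measurable_id))
  have : driftSet S A c a = liminf (fun n => {q : (ℕ → ℤ) × Y |
      (S ^ (∑ i ∈ range n, q.1 i - n * c - a)) q.2 ∈ A}) atTop := by
    ext q; rw [mem_liminf_iff_eventually_mem]; rfl
  rw [this]
  exact .measurableSet_liminf fun n => hterm _
    ((Finset.measurable_sum _ fun i _ => measurable_pi_apply i).sub_const _ |>.sub_const _)

theorem driftSet_ae_eq [MeasurableSpace Y] {μ : Measure (ℕ → ℤ)} (ν : Measure Y)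
    {A : Set Y} {d c : ℤ} (hA : ⇑(S ^ d) ⁻¹' A = A) (hx : ∀ᵐ x ∂μ, ∀ i, d ∣ x i - c) :
    driftSet S A c 0 =ᵐ[μ.prod ν] Prod.snd ⁻¹' A := by
  refine eventuallyEq_set.2 ?_
  filter_upwards [Measure.quasiMeasurePreserving_fst.ae hx] with ⟨x, y⟩ hx
  have hn : ∀ n : ℕ, (S ^ (∑ i ∈ range n, x i - n * c - 0)) y ∈ A ↔ y ∈ A := fun n => by
    have hdvd : d ∣ ∑ i ∈ range n, x i - n * c - 0 := by
      simpa [sum_sub_distrib] using dvd_sum fun i (_ : i ∈ range n) => hx i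
    rw [← Set.mem_preimage, Equiv.Perm.preimage_zpow_eq_self_of_dvd hA hdvd]
  simp only [driftSet, Set.mem_ofPred_eq, hn, eventually_const]
  rfl

end SkewProduct

theorem rokhlin_not_exact_of_Sd_not_ergodic_general {Y : Type*} [MeasurableSpace Y]
    (ν : Measure Y) [IsProbabilityMeasure ν]
    (p : Measure ℤ) [IsProbabilityMeasure p]
    (d : ℕ) (hd : 1 ≤ d)
    (hsupp : AddSubgroup.closure
        ({n : ℤ | 0 < p {n}} - {n : ℤ | 0 < p {n}}) = AddSubgroup.zmultiples (d : ℤ))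
    (μp : Measure (ℕ → ℤ)) [IsProbabilityMeasure μp]
    (hcyl : ∀ (n : ℕ) (A : Fin n → Set ℤ), (∀ i, MeasurableSet (A i)) →
      μp {x : ℕ → ℤ | ∀ i : Fin n, x (i : ℕ) ∈ A i} = ∏ i : Fin n, p (A i))
    (S : Equiv.Perm Y) (hSmp : MeasurePreserving S ν ν)
    (hSd : ¬ (∀ A : Set Y, MeasurableSet A → ⇑(S ^ (d : ℤ)) ⁻¹' A = A →
      ν A = 0 ∨ ν Aᶜ = 0)) :
    ¬ (∀ A : Set ((ℕ → ℤ) × Y),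
        (∀ n : ℕ, ∃ B : Set ((ℕ → ℤ) × Y), MeasurableSet B ∧
          A = (fun q : (ℕ → ℤ) × Y =>
                ((fun k => q.1 (k + 1)), (S ^ (q.1 0)) q.2))^[n] ⁻¹' B) →
        (μp.prod ν) A = 0 ∨ (μp.prod ν) Aᶜ = 0) := by
  intro hexact
  push Not at hSd
  obtain ⟨A, hA, hAinv, hA0, hAc0⟩ := hSd
  obtain ⟨c, hc⟩ := (ae_pos_singleton p).exists
  have hsteps : ∀ᵐ x ∂μp, ∀ i, (d : ℤ) ∣ x i - c :=
    (ae_forall_pos_singleton_of_cylinder hcyl).mono fun x hx i =>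
      Int.dvd_sub_of_closure_sub_eq_zmultiples hsupp (hx i) hc
  have hE := driftSet_ae_eq ν hAinv hsteps
  have hmeas := Equiv.Perm.measurableSet_preimage_zpow hSmp.measurable hA (by omega) hAinv
  rcases hexact (driftSet S A c 0) fun m =>
      ⟨_, measurableSet_driftSet hmeas c _, driftSet_eq_preimage_iterate A c 0 m⟩ with h | h
  · rw [measure_congr hE, measurePreserving_snd.measure_preimage hA.nullMeasurableSet] at h
    exact hA0 h
  · rw [measure_congr hE.compl, ← Set.preimage_compl,
      measurePreserving_snd.measure_preimage hA.compl.nullMeasurableSet] at h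
    exact hAc0 h

/-- If `⟨supp(p) − supp(p)⟩ = dℤ` with `d ≥ 1` and `S^d` is not ergodic, then the
Rokhlin endomorphism `T̃(x,y) = (Tx, S^{x₁} y)` over the one-sided Bernoulli shift of
the random walk `RW(ℤ,p)` is not exact. -/
theorem rokhlin_not_exact_of_Sd_not_ergodic {Y : Type*} [MeasurableSpace Y]
    (ν : Measure Y) [IsProbabilityMeasure ν]
    (p : Measure ℤ) [IsProbabilityMeasure p]
    (d : ℕ) (hd : 1 ≤ d)
    (hsupp : AddSubgroup.closure
        ({n : ℤ | 0 < p {n}} - {n : ℤ | 0 < p {n}}) = AddSubgroup.zmultiples (d : ℤ))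
    (μp : Measure (ℕ → ℤ)) [IsProbabilityMeasure μp]
    (hcyl : ∀ (n : ℕ) (A : Fin n → Set ℤ), (∀ i, MeasurableSet (A i)) →
      μp {x : ℕ → ℤ | ∀ i : Fin n, x (i : ℕ) ∈ A i} = ∏ i : Fin n, p (A i))
    (S : Equiv.Perm Y) (hSmp : MeasurePreserving S ν ν)
    (hSerg : ∀ A : Set Y, MeasurableSet A → ⇑S ⁻¹' A = A → ν A = 0 ∨ ν Aᶜ = 0)
    (hSd : ¬ (∀ A : Set Y, MeasurableSet A → ⇑(S ^ (d : ℤ)) ⁻¹' A = A →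
      ν A = 0 ∨ ν Aᶜ = 0)) :
    ¬ (∀ A : Set ((ℕ → ℤ) × Y),
        (∀ n : ℕ, ∃ B : Set ((ℕ → ℤ) × Y), MeasurableSet B ∧
          A = (fun q : (ℕ → ℤ) × Y =>
                ((fun k => q.1 (k + 1)), (S ^ (q.1 0)) q.2))^[n] ⁻¹' B) →
        (μp.prod ν) A = 0 ∨ (μp.prod ν) Aᶜ = 0) :=
  rokhlin_not_exact_of_Sd_not_ergodic_general ν p d hd hsupp μp hcyl S hSmp hSd
end
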